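/- If B₁ and B₂ are distinct points in S_B = {(x,y) : y ≥ 0, x² + y² ≥ 1, (x-1)² + y² ≤ 1}, then the triangles with vertices (0,0), B₁, (1,0) and (0,0), B₂, (1,0) are not similar. -/

import Mathlib

open Real EuclideanGeometry

/-!
For a point B of S_B, the triangle with vertices A = (0,0), B, C = (1,0) has sides
|BC| ≤ |AC| = 1 ≤ |AB|, so its base AC is a middle side. A similarity of ratio r carries the
multiset of side lengths of one triangle onto r times that of the other; comparing middle sides
gives r = 1, so |AB| and |BC| agree for B₁ and B₂, and a point of the upper half-plane is
determined by its distances to A and C.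
-/

/-- A point of the Euclidean plane given by Cartesian coordinates. -/
noncomputable def pt (x y : ℝ) : EuclideanSpace ℝ (Fin 2) := WithLp.toLp 2 ![x, y]

/-- A plane similarity transformation: a map multiplying all distances by a
fixed positive ratio (equivalently, a composition of translations, rotations,
reflections and dilations). -/
def IsPlaneSimilarity (f : EuclideanSpace ℝ (Fin 2) → EuclideanSpace ℝ (Fin 2)) : Prop :=
  ∃ r : ℝ, 0 < r ∧ ∀ p q, dist (f p) (f q) = r * dist p q

lemma Multiset.triple_eq_triple_cases {α : Type*} {a b c x y z : α}
    (h : ({a, b, c} : Multiset α) = {x, y, z}) :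
    a = x ∧ b = y ∧ c = z ∨ a = x ∧ b = z ∧ c = y ∨ a = y ∧ b = x ∧ c = z ∨
      a = y ∧ b = z ∧ c = x ∨ a = z ∧ b = x ∧ c = y ∨ a = z ∧ b = y ∧ c = x := by
  simp only [Multiset.insert_eq_cons, Multiset.cons_eq_cons, Multiset.singleton_eq_cons_iff] at h
  aesop

section SideLengths

variable {α : Type*} [PseudoMetricSpace α]

def sideLengths (p q s : α) : Multiset ℝ := {dist p q, dist q s, dist s p}

lemma sideLengths_eq_of_triple_eq {p q s p' q' s' : α}
    (h : ({p, q, s} : Multiset α) = {p', q', s'}) :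
    sideLengths p q s = sideLengths p' q' s' := by
  rcases Multiset.triple_eq_triple_cases h with
    ⟨rfl, rfl, rfl⟩ | ⟨rfl, rfl, rfl⟩ | ⟨rfl, rfl, rfl⟩ | ⟨rfl, rfl, rfl⟩ | ⟨rfl, rfl, rfl⟩ |
      ⟨rfl, rfl, rfl⟩ <;>
    simp only [sideLengths, Multiset.insert_eq_cons, ← Multiset.singleton_add, dist_comm]
    <;> abel

lemma sideLengths_map_of_dist_eq {f : α → α} {r : ℝ} (hf : ∀ p q, dist (f p) (f q) = r * dist p q)
    (p q s : α) : sideLengths (f p) (f q) (f s) = (sideLengths p q s).map (r * ·) := by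
  simp [sideLengths, hf]

end SideLengths

lemma eq_of_map_mul_triple_eq {r a c a' c' : ℝ} (hr : 0 < r) (ha : 1 ≤ a) (hc : c ≤ 1) (ha' : 1 ≤ a')
    (hc' : c' ≤ 1) (h : ({a, c, 1} : Multiset ℝ).map (r * ·) = {a', c', 1}) :
    a = a' ∧ c = c' := by
  simp only [Multiset.insert_eq_cons, Multiset.map_cons, Multiset.map_singleton] at h
  have hr1 : r = 1 := by
    rcases Multiset.triple_eq_triple_cases h with h | h | h | h | h | h <;> nlinarith
  subst hr1
  simp only [one_mul] at h
  rcases Multiset.triple_eq_triple_cases h with h | h | h | h | h | h <;> constructor <;> linarith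

def apexRegion : Set (EuclideanSpace ℝ (Fin 2)) :=
  {B | 0 ≤ B 1 ∧ 1 ≤ B 0 ^ 2 + B 1 ^ 2 ∧ (B 0 - 1) ^ 2 + B 1 ^ 2 ≤ 1}

lemma dist_pt_sq (x y : ℝ) (P : EuclideanSpace ℝ (Fin 2)) :
    dist (pt x y) P ^ 2 = (x - P 0) ^ 2 + (y - P 1) ^ 2 := by
  rw [EuclideanSpace.dist_eq, Real.sq_sqrt (by positivity)]
  simp [pt, Fin.sum_univ_two, Real.dist_eq, sq_abs]

lemma dist_pt_one_zero_pt_zero_zero : dist (pt 1 0) (pt 0 0) = 1 := by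
  rw [← Real.sqrt_sq dist_nonneg, dist_pt_sq]
  simp [pt]

lemma one_le_dist_of_mem_apexRegion {B : EuclideanSpace ℝ (Fin 2)} (hB : B ∈ apexRegion) :
    1 ≤ dist (pt 0 0) B := by
  have h := dist_pt_sq 0 0 B
  nlinarith [hB.2.1, dist_nonneg (x := pt 0 0) (y := B)]

lemma dist_le_one_of_mem_apexRegion {B : EuclideanSpace ℝ (Fin 2)} (hB : B ∈ apexRegion) :
    dist B (pt 1 0) ≤ 1 := by
  have h := dist_pt_sq 1 0 B
  rw [dist_comm]
  nlinarith [hB.2.2, dist_nonneg (x := pt 1 0) (y := B)]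

lemma eq_of_dist_eq_of_nonneg {P Q : EuclideanSpace ℝ (Fin 2)} (hP : 0 ≤ P 1) (hQ : 0 ≤ Q 1)
    (h₀ : dist (pt 0 0) P = dist (pt 0 0) Q) (h₁ : dist P (pt 1 0) = dist Q (pt 1 0)) :
    P = Q := by
  rw [dist_comm P, dist_comm Q] at h₁
  have e₀ := dist_pt_sq 0 0 P
  have e₁ := dist_pt_sq 1 0 P
  rw [h₀, dist_pt_sq] at e₀
  rw [h₁, dist_pt_sq] at e₁
  have hx : P 0 = Q 0 := by nlinarith
  have hy : P 1 = Q 1 := by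
    rw [hx] at e₀
    nlinarith
  ext i
  fin_cases i
  exacts [hx, hy]

/-- Distinct points of S_B give non-similar triangles on the base (0,0)-(1,0). -/
theorem stmt3 (B₁ B₂ : EuclideanSpace ℝ (Fin 2))
    (h₁ : 0 ≤ B₁ 1 ∧ 1 ≤ (B₁ 0)^2 + (B₁ 1)^2 ∧ (B₁ 0 - 1)^2 + (B₁ 1)^2 ≤ 1)
    (h₂ : 0 ≤ B₂ 1 ∧ 1 ≤ (B₂ 0)^2 + (B₂ 1)^2 ∧ (B₂ 0 - 1)^2 + (B₂ 1)^2 ≤ 1)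
    (hne : B₁ ≠ B₂) :
    ¬ ∃ f : EuclideanSpace ℝ (Fin 2) → EuclideanSpace ℝ (Fin 2),
        IsPlaneSimilarity f ∧
        Multiset.map f {pt 0 0, B₁, pt 1 0} = ({pt 0 0, B₂, pt 1 0} : Multiset (EuclideanSpace ℝ (Fin 2))) := by
  rintro ⟨f, ⟨r, hr, hf⟩, hmap⟩
  have hsides :
      (sideLengths (pt 0 0) B₁ (pt 1 0)).map (r * ·) = sideLengths (pt 0 0) B₂ (pt 1 0) := by
    rw [← sideLengths_map_of_dist_eq hf, sideLengths_eq_of_triple_eq (by simpa using hmap)]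
  rw [sideLengths, sideLengths, dist_pt_one_zero_pt_zero_zero] at hsides
  obtain ⟨hA, hC⟩ := eq_of_map_mul_triple_eq hr (one_le_dist_of_mem_apexRegion h₁)
    (dist_le_one_of_mem_apexRegion h₁) (one_le_dist_of_mem_apexRegion h₂)
    (dist_le_one_of_mem_apexRegion h₂) hsides
  exact hne (eq_of_dist_eq_of_nonneg h₁.1 h₂.1 hA hC)
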